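/- arXiv:math/0612616 — 2 statements merged into one kernel-verified Lean document; each statement's English description precedes it below -/
import Mathlib

section
/- (Sprague–Grundy Theorem) For every impartial game G there exists a natural number m such that G is equivalent (up to normal-play game equivalence) to the Nim-heap *m. -/
universe u

namespace SetTheory

/-- Pre-games, as in the older Mathlib (`SetTheory.PGame`, since removed from Mathlib). -/
inductive PGame : Type (u + 1)
  | mk : ∀ α β : Type u, (α → PGame) → (β → PGame) → PGame

namespace PGame

/-- The pair `(x ≤ y, x ⧏ y)`, defined by simultaneous recursion as in the older Mathlib. -/
noncomputable def leLF (x : PGame.{u}) : PGame.{u} → Prop × Prop :=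
  PGame.rec (motive := fun _ => PGame.{u} → Prop × Prop)
    (fun _ _ _ _ ihxL ihxR y =>
      PGame.rec (motive := fun _ => Prop × Prop)
        (fun yl yr yL yR ihyL ihyR =>
          ((∀ i, (ihxL i (mk yl yr yL yR)).2) ∧ ∀ j, (ihyR j).2,
           (∃ i, (ihyL i).1) ∨ ∃ j, (ihxR j (mk yl yr yL yR)).1)) y) x

noncomputable instance : LE PGame.{u} := ⟨fun x y => (leLF x y).1⟩

/-- Game equivalence: `x ≤ y ∧ y ≤ x`. -/
def Equiv (x y : PGame.{u}) : Prop := x ≤ y ∧ y ≤ x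

instance : HasEquiv PGame.{u} := ⟨Equiv⟩

/-- Negation swaps the roles of the players. -/
noncomputable def neg : PGame.{u} → PGame.{u}
  | mk l r L R => mk r l (fun i => neg (R i)) (fun i => neg (L i))

noncomputable instance : Neg PGame.{u} := ⟨neg⟩

/-- Auxiliary predicate for impartiality, as in the older Mathlib. -/
def ImpartialAux : PGame.{u} → Prop
  | mk l r L R => (mk l r L R ≈ -mk l r L R) ∧ (∀ i, ImpartialAux (L i)) ∧ ∀ j, ImpartialAux (R j)

/-- A game is impartial if it is equivalent to its negative, and so are all its options. -/
class Impartial (G : PGame.{u}) : Prop where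
  out : ImpartialAux G

/-- Short games: finitely many options, all of them short. -/
class inductive Short : PGame.{u} → Type (u + 1)
  | mk :
    ∀ {α β : Type u} {L : α → PGame.{u}} {R : β → PGame.{u}} (_ : ∀ i : α, Short (L i))
      (_ : ∀ j : β, Short (R j)) [Fintype α] [Fintype β] [DecidableEq α] [DecidableEq β],
      Short (mk α β L R)

/-- The nim game `nim o`, whose options are `nim a` for all `a < o`. -/
noncomputable def nim (o : Ordinal.{u}) : PGame.{u} :=
  mk o.ToType o.ToType (fun x => nim (Ordinal.ToType.toOrd x).1)
    (fun x => nim (Ordinal.ToType.toOrd x).1)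
termination_by o
decreasing_by all_goals exact (Ordinal.ToType.toOrd _).2

end PGame

end SetTheory

open SetTheory PGame

/-! By induction, every left option `Gᵢ` of `G` is equivalent to a heap `*f(i)`; let `m` be the
least natural number not of the form `f(i)`, which exists because `G` has finitely many options.
For impartial `G` we have `*a ≤ G ↔ G ≤ *a`, since `-*a = *a` and `G ≈ -G`, so it suffices to
show `G ≤ *m`. No option `Gᵢ ≈ *f(i)` lies above `*m`, as `f(i) ≠ m`; and no heap `*a` with
`a < m` lies above `G` (hence, by the symmetry, none lies below `G`), because `*a ≈ Gᵢ` for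
some `i` and `G ≰ Gᵢ`. -/

theorem Ordinal.isLeast_compl_range_natCast {ι : Type*} {f : ι → ℕ} {n : ℕ}
    (h : IsLeast (Set.range f)ᶜ n) : IsLeast (Set.range fun i => (f i : Ordinal.{u}))ᶜ n := by
  refine ⟨fun ⟨i, hi⟩ => h.1 ⟨i, Nat.cast_injective hi⟩, fun b hb => le_of_not_gt fun hbn => ?_⟩
  obtain ⟨k, rfl⟩ := Ordinal.lt_omega0.1 (hbn.trans (Ordinal.natCast_lt_omega0 n))
  obtain ⟨i, rfl⟩ : k ∈ Set.range f := by
    by_contra hk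
    exact (h.2 hk).not_gt (by exact_mod_cast hbn)
  exact hb ⟨i, rfl⟩

namespace SetTheory.PGame

def LeftMoves : PGame.{u} → Type u
  | mk l _ _ _ => l

def RightMoves : PGame.{u} → Type u
  | mk _ r _ _ => r

def moveLeft : (x : PGame.{u}) → x.LeftMoves → PGame.{u}
  | mk _ _ L _ => L

def moveRight : (x : PGame.{u}) → x.RightMoves → PGame.{u}
  | mk _ _ _ R => R

def LF (x y : PGame.{u}) : Prop := (leLF x y).2

infixl:50 " ⧏ " => LF

theorem le_iff_forall_lf {x y : PGame.{u}} :
    x ≤ y ↔ (∀ i, x.moveLeft i ⧏ y) ∧ ∀ j, x ⧏ y.moveRight j := by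
  cases x; cases y; rfl

theorem lf_iff_exists_le {x y : PGame.{u}} :
    x ⧏ y ↔ (∃ i, x ≤ y.moveLeft i) ∨ ∃ j, x.moveRight j ≤ y := by
  cases x; cases y; rfl

private theorem not_le_iff_lf_and_symm (x y : PGame.{u}) :
    (¬ x ≤ y ↔ y ⧏ x) ∧ (¬ y ≤ x ↔ x ⧏ y) := by
  induction x generalizing y with
  | mk xl xr xL xR IHxl IHxr =>
  induction y with
  | mk yl yr yL yR IHyl IHyr =>
  constructor <;> rw [le_iff_forall_lf, lf_iff_exists_le, not_and_or, not_forall, not_forall]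
  · exact or_congr (exists_congr fun i => not_iff_comm.1 (IHxl i _).2)
      (exists_congr fun j => not_iff_comm.1 (IHyr j).2)
  · exact or_congr (exists_congr fun i => not_iff_comm.1 (IHyl i).1)
      (exists_congr fun j => not_iff_comm.1 (IHxr j _).1)

theorem lf_iff_not_le {x y : PGame.{u}} : x ⧏ y ↔ ¬ y ≤ x :=
  (not_le_iff_lf_and_symm y x).1.symm

private theorem le_trans_aux {x y z : PGame.{u}}
    (h₁ : ∀ i, y ≤ z → z ≤ x.moveLeft i → y ≤ x.moveLeft i)
    (h₂ : ∀ j, z.moveRight j ≤ x → x ≤ y → z.moveRight j ≤ y) (hxy : x ≤ y) (hyz : y ≤ z) :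
    x ≤ z := by
  refine le_iff_forall_lf.2
    ⟨fun i => lf_iff_not_le.2 fun h => ?_, fun j => lf_iff_not_le.2 fun h => ?_⟩
  · exact lf_iff_not_le.1 ((le_iff_forall_lf.1 hxy).1 i) (h₁ i hyz h)
  · exact lf_iff_not_le.1 ((le_iff_forall_lf.1 hyz).2 j) (h₂ j h hxy)

noncomputable instance : Preorder PGame.{u} where
  le_refl x := by
    induction x with
    | mk xl xr xL xR IHl IHr =>
    exact le_iff_forall_lf.2 ⟨fun i => lf_iff_exists_le.2 (.inl ⟨i, IHl i⟩),
      fun j => lf_iff_exists_le.2 (.inr ⟨j, IHr j⟩)⟩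
  le_trans x y z := by
    -- the three rotations of transitivity have to be proved simultaneously
    suffices ∀ x y z : PGame.{u},
        (x ≤ y → y ≤ z → x ≤ z) ∧ (y ≤ z → z ≤ x → y ≤ x) ∧ (z ≤ x → x ≤ y → z ≤ y) from
      (this x y z).1
    intro x
    induction x with
    | mk xl xr xL xR IHxl IHxr =>
    intro y
    induction y with
    | mk yl yr yL yR IHyl IHyr =>
    intro z
    induction z with
    | mk zl zr zL zR IHzl IHzr =>
    exact ⟨le_trans_aux (fun i => (IHxl i _ _).2.1) (fun j => (IHzr j).2.2),
      le_trans_aux (fun i => (IHyl i _).2.2) (fun j => (IHxr j _ _).1),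
      le_trans_aux (fun i => (IHzl i).1) (fun j => (IHyr j _).2.1)⟩

theorem moveLeft_lf (x : PGame.{u}) (i : x.LeftMoves) : x.moveLeft i ⧏ x :=
  lf_iff_exists_le.2 (.inl ⟨i, le_rfl⟩)

theorem lf_irrefl (x : PGame.{u}) : ¬ x ⧏ x :=
  fun h => lf_iff_not_le.1 h le_rfl

protected theorem neg_le_neg_iff {x y : PGame.{u}} : -y ≤ -x ↔ x ≤ y := by
  suffices ∀ x y : PGame.{u}, (-y ≤ -x ↔ x ≤ y) ∧ (-y ⧏ -x ↔ x ⧏ y) from (this x y).1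
  intro x
  induction x with
  | mk xl xr xL xR IHxl IHxr =>
  intro y
  induction y with
  | mk yl yr yL yR IHyl IHyr =>
  constructor
  · rw [le_iff_forall_lf, le_iff_forall_lf]
    exact and_comm.trans (and_congr (forall_congr' fun i => (IHxl i _).2)
      (forall_congr' fun j => (IHyr j).2))
  · rw [lf_iff_exists_le, lf_iff_exists_le]
    exact or_comm.trans (or_congr (exists_congr fun i => (IHyl i).1)
      (exists_congr fun j => (IHxr j _).1))

theorem neg_nim (o : Ordinal.{u}) : -nim o = nim o := by
  induction o using WellFoundedLT.induction with
  | _ o ih =>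
  rw [nim]
  change mk _ _ (fun x => -nim _) (fun x => -nim _) = _
  congr 1 <;> funext x <;> exact ih _ (Ordinal.ToType.toOrd x).2

theorem le_nim_iff {x : PGame.{u}} {o : Ordinal.{u}} :
    x ≤ nim o ↔ (∀ i, x.moveLeft i ⧏ nim o) ∧ ∀ a < o, x ⧏ nim a := by
  rw [le_iff_forall_lf]
  refine and_congr_right' ?_
  conv_lhs => rw [nim]
  exact ⟨fun h a ha => by simpa [moveRight] using h (Ordinal.ToType.mk ⟨a, ha⟩),
    fun h j => h _ (Ordinal.ToType.toOrd j).2⟩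

theorem nim_le_nim_iff {a b : Ordinal.{u}} : nim a ≤ nim b ↔ a = b := by
  have not_le_nim_of_lt {a b : Ordinal.{u}} (hab : a < b) : ¬ nim a ≤ nim b :=
    fun h => lf_irrefl _ ((le_nim_iff.1 h).2 a hab)
  refine ⟨fun h => ?_, fun h => h ▸ le_rfl⟩
  rcases lt_trichotomy a b with hab | rfl | hba
  · exact absurd h (not_le_nim_of_lt hab)
  · rfl
  · rw [← PGame.neg_le_neg_iff, neg_nim, neg_nim] at h
    exact absurd h (not_le_nim_of_lt hba)

theorem nim_le_iff_le_nim {G : PGame.{u}} (hG : G ≈ -G) (o : Ordinal.{u}) :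
    nim o ≤ G ↔ G ≤ nim o := by
  rw [← PGame.neg_le_neg_iff, neg_nim]
  exact ⟨hG.1.trans, hG.2.trans⟩

theorem equiv_nim_of_isLeast {G : PGame.{u}} (hG : G ≈ -G) {f : G.LeftMoves → Ordinal.{u}}
    (hf : ∀ i, G.moveLeft i ≈ nim (f i)) {o : Ordinal.{u}} (ho : IsLeast (Set.range f)ᶜ o) :
    G ≈ nim o := by
  have hle : G ≤ nim o := by
    refine le_nim_iff.2 ⟨fun i => lf_iff_not_le.2 fun h => ?_, fun a ha => lf_iff_not_le.2 ?_⟩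
    · exact ho.1 ⟨i, (nim_le_nim_iff.1 (h.trans (hf i).1)).symm⟩
    · obtain ⟨i, rfl⟩ : a ∈ Set.range f := by
        by_contra hna
        exact (ho.2 hna).not_gt ha
      rw [nim_le_iff_le_nim hG]
      exact fun h => lf_iff_not_le.1 (moveLeft_lf G i) (h.trans (hf i).2)
  exact ⟨hle, (nim_le_iff_le_nim hG o).2 hle⟩

theorem ImpartialAux.exists_nat_equiv_nim {G : PGame.{u}} (hG : ImpartialAux G) (hs : Short G) :
    ∃ n : ℕ, G ≈ nim n := by
  induction G with
  | mk l r L R ih =>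
  obtain ⟨hneg, hL, -⟩ := hG
  obtain ⟨hLs, -⟩ := hs
  choose f hf using fun i => ih i (hL i) (hLs i)
  have hne : (Set.range f)ᶜ.Nonempty := (Set.finite_range f).infinite_compl.nonempty
  exact ⟨sInf (Set.range f)ᶜ, equiv_nim_of_isLeast hneg hf
    (Ordinal.isLeast_compl_range_natCast ⟨Nat.sInf_mem hne, fun _ => Nat.sInf_le⟩)⟩

end SetTheory.PGame

/-- **Sprague–Grundy Theorem.** Every impartial game (a finite, loopfree game in which
both players always have the same available moves) is equivalent in normal play to
some Nim-heap `*m` with `m` a natural number. -/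
theorem sprague_grundy (G : PGame.{0}) [G.Impartial] [G.Short] :
    ∃ m : ℕ, G ≈ nim (m : Ordinal) :=
  Impartial.out.exists_nat_equiv_nim inferInstance
end

section
/- (Uniqueness of the reduced quotient of a bipartite monoid) Let (Q, P) be a bipartite monoid: Q a commutative monoid and P ⊆ Q a subset. Define x ρ y iff for all z ∈ Q, (x·z ∈ P ↔ y·z ∈ P); ρ is a monoid congruence on Q and the reduction (Q', P') is the quotient monoid Q/ρ together with P' = {[x]_ρ : x ∈ P}. Suppose (S, R) is a bipartite monoid and f : Q → S is a surjective monoid homomorphism such that for all x ∈ Q, x ∈ P if and only if f(x) ∈ R; let (S', R') be the reduction of (S, R) by the analogous congruence τ on S. Then there is a monoid isomorphism i : Q' → S' with i([x]_ρ) = [f(x)]_τ for all x ∈ Q, and for all x ∈ Q, [x]_ρ ∈ P' if and only if i([x]_ρ) ∈ R'. -/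
/-- The indistinguishability congruence of a bipartite monoid `(Q, P)`:
`x ρ y` iff for all `z`, `x * z ∈ P ↔ y * z ∈ P`. -/
def indisCon {Q : Type*} [CommMonoid Q] (P : Set Q) : Con Q where
  r x y := ∀ z, x * z ∈ P ↔ y * z ∈ P
  iseqv := ⟨fun _ _ => Iff.rfl, fun h z => (h z).symm, fun h1 h2 z => (h1 z).trans (h2 z)⟩
  mul' := by
    intro a b c d hab hcd z
    calc a * c * z ∈ P ↔ b * (c * z) ∈ P := by rw [mul_assoc]; exact hab (c * z)
      _ ↔ c * (b * z) ∈ P := by rw [mul_left_comm]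
      _ ↔ d * (b * z) ∈ P := hcd (b * z)
      _ ↔ b * d * z ∈ P := by rw [mul_left_comm, mul_assoc]

/-! A surjective `f` reflecting `P` identifies `ρ` with the pullback of `τ` along `f`, so the
two quotients are isomorphic; and since `P` is a union of `ρ`-classes (test
with `z = 1`), membership in `P'` and `R'` is just membership in `P` and `R`. -/

section

variable {Q S : Type*} [CommMonoid Q] [CommMonoid S]

theorem indisCon_mk'_mem_image_iff (P : Set Q) (x : Q) :
    (indisCon P).mk' x ∈ (indisCon P).mk' '' P ↔ x ∈ P := by
  refine ⟨?_, fun hx => ⟨x, hx, rfl⟩⟩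
  rintro ⟨p, hp, hpx⟩
  have hpx1 : p * 1 ∈ P ↔ x * 1 ∈ P := (Con.eq _).mp hpx 1
  rw [mul_one, mul_one] at hpx1
  exact hpx1.mp hp

theorem indisCon_eq_comap {P : Set Q} {R : Set S} {f : Q →* S} (hf : Function.Surjective f)
    (hPR : ∀ x, x ∈ P ↔ f x ∈ R) :
    indisCon P = (indisCon R).comap f f.map_mul := by
  ext x y
  rw [Con.comap_rel]
  refine ⟨fun h w => ?_, fun h z => ?_⟩
  · obtain ⟨z, rfl⟩ := hf w
    simpa only [← map_mul, ← hPR] using h z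
  · simpa only [hPR, map_mul] using h (f z)

end

/-- **Uniqueness of the reduced quotient of a bipartite monoid.**  Let `(Q, P)` be a
bipartite monoid, with reduction `(Q', P') = (Q ⧸ ρ, image of P)` where `ρ` is the
indistinguishability congruence.  If `f : Q → S` is a surjective monoid homomorphism
onto a bipartite monoid `(S, R)` with `x ∈ P ↔ f x ∈ R` for all `x`, and `(S', R')` is
the reduction of `(S, R)` by the analogous congruence `τ`, then there is a monoid
isomorphism `i : Q' ≃* S'` with `i [x]_ρ = [f x]_τ`, and `[x]_ρ ∈ P'` iff
`i [x]_ρ ∈ R'`. -/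
theorem reduced_quotient_unique {Q S : Type*} [CommMonoid Q] [CommMonoid S]
    (P : Set Q) (R : Set S) (f : Q →* S) (hf : Function.Surjective f)
    (hPR : ∀ x, x ∈ P ↔ f x ∈ R) :
    ∃ i : (indisCon P).Quotient ≃* (indisCon R).Quotient,
      (∀ x : Q, i ((indisCon P).mk' x) = (indisCon R).mk' (f x)) ∧
      ∀ x : Q,
        ((indisCon P).mk' x ∈ (indisCon P).mk' '' P ↔
          i ((indisCon P).mk' x) ∈ (indisCon R).mk' '' R) := by
  let i := (Con.congr (MulEquiv.refl Q) (indisCon_eq_comap hf hPR)).trans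
    ((indisCon R).comapQuotientEquivOfSurj f hf)
  have hi : ∀ x : Q, i ((indisCon P).mk' x) = (indisCon R).mk' (f x) := fun _ => rfl
  refine ⟨i, hi, fun x => ?_⟩
  rw [hi, indisCon_mk'_mem_image_iff, indisCon_mk'_mem_image_iff, hPR]
end
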